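/- Let Sk(v) be an admissible component. The operation u_1 * u_2 := sigma^{u_1}(u_2) makes Sk^D(v) into a group with unit element v, and Sp^D(v) is a subgroup of Sk^D(v) under this operation. -/

import Mathlib

open scoped ComplexOrder

attribute [local instance] Classical.propDecidable

namespace KMS

noncomputable section

variable (X : Type*) [Fintype X] (H : Type*) [AddCommGroup H] [Module ℂ H]

/-- A root datum: maps `a : X → h`, `b : X → h*`, parity `p`, with `a`, `b`
linearly independent families (the "injectivity" of the induced maps from the span of `X`). -/
structure RootDatum where
  a : X → H
  b : X → Module.Dual ℂ H
  p : X → ZMod 2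
  lin_indep_a : LinearIndependent ℂ a
  lin_indep_b : LinearIndependent ℂ b

variable {X H}

/-- The Cartan matrix entry `a^v_{xy} = ⟨a_v(x), b_v(y)⟩`. -/
def cartan (v : RootDatum X H) (x y : X) : ℂ := v.b y (v.a x)

/-- `x` is reflectable at `v`. -/
def Reflectable (v : RootDatum X H) (x : X) : Prop :=
  (cartan v x x = 0 ∧ v.p x = 1) ∨
  (cartan v x x ≠ 0 ∧ v.p x = 0 ∧
    ∀ y, y ≠ x → ∃ n : ℕ, 2 * cartan v x y / cartan v x x = -(n : ℂ)) ∨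
  (cartan v x x ≠ 0 ∧ v.p x = 1 ∧
    ∀ y, y ≠ x → ∃ n : ℕ, cartan v x y / cartan v x x = -(n : ℂ))

/-- The anisotropic reflexion `r_x : v → v'`. -/
def IsAnisoReflexion (x : X) (v v' : RootDatum X H) : Prop :=
  Reflectable v x ∧ cartan v x x ≠ 0 ∧ v'.p = v.p ∧
  (∀ y, v'.a y = v.a y - (2 * cartan v y x / cartan v x x) • v.a x) ∧
  (∀ y, v'.b y = v.b y - (2 * cartan v x y / cartan v x x) • v.b x)

/-- The isotropic reflexion `r_x : v → v'`. -/
def IsIsoReflexion (x : X) (v v' : RootDatum X H) : Prop :=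
  Reflectable v x ∧ cartan v x x = 0 ∧
  v'.a x = -v.a x ∧ v'.b x = -v.b x ∧ v'.p x = v.p x ∧
  ∀ y, y ≠ x →
    (cartan v x y = 0 → v'.a y = v.a y ∧ v'.b y = v.b y ∧ v'.p y = v.p y) ∧
    (cartan v x y ≠ 0 →
      v'.a y = v.a y + (cartan v y x / cartan v x y) • v.a x ∧
      v'.b y = v.b y + v.b x ∧ v'.p y = v.p y + 1)

/-- A reflexion is either anisotropic or isotropic. -/
def IsReflexion (x : X) (v v' : RootDatum X H) : Prop :=
  IsAnisoReflexion x v v' ∨ IsIsoReflexion x v v'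

/-- A path of reflexions from `v` to `u`, recorded by the ordered list of its marks. -/
inductive IsPath : RootDatum X H → List X → RootDatum X H → Prop
  | nil (v : RootDatum X H) : IsPath v [] v
  | cons {v v' u : RootDatum X H} {x : X} {ms : List X} :
      IsReflexion x v v' → IsPath v' ms u → IsPath v (x :: ms) u

/-- A path of isotropic reflexions from `v` to `u`. -/
inductive IsIsoPath : RootDatum X H → List X → RootDatum X H → Prop
  | nil (v : RootDatum X H) : IsIsoPath v [] v
  | cons {v v' u : RootDatum X H} {x : X} {ms : List X} :
      IsIsoReflexion x v v' → IsIsoPath v' ms u → IsIsoPath v (x :: ms) u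

/-- The skeleton `Sk(v)`. -/
def Skeleton (v : RootDatum X H) : Set (RootDatum X H) := {u | ∃ ms : List X, IsPath v ms u}

/-- The spine `Sp(v)`. -/
def Spine (v : RootDatum X H) : Set (RootDatum X H) := {u | ∃ ms : List X, IsIsoPath v ms u}

/-- Admissibility of the component of `v`. -/
def Admissible (v : RootDatum X H) : Prop :=
  ∀ u ∈ Skeleton v, ∀ x, Reflectable u x → ∀ y, cartan u x y = 0 → cartan u y x = 0

/-- Full reflectability of the component of `v`. -/
def FullyReflectable (v : RootDatum X H) : Prop :=
  ∀ u ∈ Skeleton v, ∀ x, Reflectable u x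

/-- Anisotropic real roots. -/
def DeltaAn (v : RootDatum X H) : Set (Module.Dual ℂ H) :=
  {α | ∃ u x, u ∈ Skeleton v ∧ Reflectable u x ∧ cartan u x x ≠ 0 ∧ u.b x = α}

/-- Isotropic real roots. -/
def DeltaIs (v : RootDatum X H) : Set (Module.Dual ℂ H) :=
  {α | ∃ u x, u ∈ Skeleton v ∧ Reflectable u x ∧ cartan u x x = 0 ∧ u.b x = α}

/-- The coroot `α^∨ = (2 / a^u_{xx}) a_u(x)` of an anisotropic real root
(independent of the choice of presentation). -/
def coroot (v : RootDatum X H) (α : Module.Dual ℂ H) : H :=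
  if h : ∃ u x, u ∈ Skeleton v ∧ Reflectable u x ∧ cartan u x x ≠ 0 ∧ u.b x = α then
    (2 / cartan h.choose h.choose_spec.choose h.choose_spec.choose) •
      h.choose.a h.choose_spec.choose
  else 0

/-- The parity `p(α)` of an anisotropic real root. -/
def rootParity (v : RootDatum X H) (α : Module.Dual ℂ H) : ZMod 2 :=
  if h : ∃ u x, u ∈ Skeleton v ∧ Reflectable u x ∧ cartan u x x ≠ 0 ∧ u.b x = α then
    h.choose.p h.choose_spec.choose
  else 0

/-- Principal roots: anisotropic simple roots at vertices of the spine. -/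
def SigmaPr (v : RootDatum X H) : Set (Module.Dual ℂ H) :=
  {α | ∃ u x, u ∈ Spine v ∧ Reflectable u x ∧ cartan u x x ≠ 0 ∧ u.b x = α}

/-- The set `π`: even principal roots together with doubles of odd principal roots. -/
def piSet (v : RootDatum X H) : Set (Module.Dual ℂ H) :=
  {α | α ∈ SigmaPr v ∧ rootParity v α = 0} ∪
  {β | ∃ α ∈ SigmaPr v, rootParity v α = 1 ∧ β = (2 : ℂ) • α}

/-- The coroot of an element of `π` (with `(2α)^∨ = α^∨ / 2` for odd principal `α`). -/
def piCoroot (v : RootDatum X H) (β : Module.Dual ℂ H) : H :=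
  if β ∈ SigmaPr v then coroot v β else (2 : ℂ)⁻¹ • coroot v ((2 : ℂ)⁻¹ • β)

/-- The Weyl group: the subgroup of `GL(h^*)` generated by the reflections
`s_α : λ ↦ λ - ⟨α^∨, λ⟩ α` for `α ∈ Δ_an`. -/
def WeylGroup (v : RootDatum X H) :
    Subgroup (Module.Dual ℂ H ≃ₗ[ℂ] Module.Dual ℂ H) :=
  Subgroup.closure
    {w | ∃ α ∈ DeltaAn v, ∀ lam : Module.Dual ℂ H, w lam = lam - lam (coroot v α) • α}

/-- `Q^+_u`: nonnegative integral combinations of the simple roots at `u`. -/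
def QPlus (u : RootDatum X H) : Set (Module.Dual ℂ H) :=
  {μ | ∃ k : X → ℕ, μ = ∑ x, (k x : ℂ) • u.b x}

/-- `Q_u`: integral combinations of the simple roots at `u`. -/
def QLattice (u : RootDatum X H) : Set (Module.Dual ℂ H) :=
  {μ | ∃ k : X → ℤ, μ = ∑ x, (k x : ℂ) • u.b x}

/-- The convex cone of finite nonnegative real combinations of elements of `S`. -/
def coneR {M : Type*} [AddCommGroup M] [Module ℝ M] (S : Set M) : Set M :=
  {μ | ∃ (T : Finset M) (c : M → ℝ), ↑T ⊆ S ∧ (∀ m, 0 ≤ c m) ∧ μ = ∑ m ∈ T, c m • m}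

/-- The totally positive cone `Q^{++}_ℝ`. -/
def QppR (v : RootDatum X H) : Set (Module.Dual ℂ H) :=
  ⋂ u ∈ Skeleton v, coneR (Set.range u.b)

/-- Indecomposability of a square matrix. -/
def IsIndecMatrix {Y : Type*} [Fintype Y] (A : Y → Y → ℂ) : Prop :=
  Fintype.card Y = 1 ∨
  ∃ (s : ℕ) (e : Fin s ≃ Y), ∀ j : Fin s,
    A (e j) (e ⟨(j.1 + 1) % s, Nat.mod_lt _ j.pos⟩) ≠ 0

/-- Indecomposability of the component of `v`. -/
def IndecComp (v : RootDatum X H) : Prop :=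
  ∀ u ∈ Spine v, IsIndecMatrix (cartan u)

/-- The Cartan matrix at `v` as a matrix. -/
def cartanMatrix (v : RootDatum X H) : Matrix X X ℂ := Matrix.of fun x y => cartan v x y

/-- A Kac-Moody component: fully reflectable, admissible and `dim h = |X| + corank A^v`. -/
def IsKacMoodyComp (v : RootDatum X H) : Prop :=
  FullyReflectable v ∧ Admissible v ∧
  Module.finrank ℂ H = Fintype.card X + (Fintype.card X - (cartanMatrix v).rank)

/-- Type (Aff): the real span of `Q^{++}_ℝ` is one-dimensional. -/
def TypeAff (v : RootDatum X H) : Prop :=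
  Module.finrank ℝ (Submodule.span ℝ (QppR v)) = 1

/-- The set `π_S` of `S`-principal elements. -/
def piS (v : RootDatum X H) : Set (Module.Dual ℂ H) :=
  {α | ∃ u x, u ∈ Spine v ∧
    ((u.p x = 0 ∧ α = u.b x) ∨ (u.p x = 1 ∧ cartan u x x ≠ 0 ∧ α = (2 : ℂ) • u.b x))}

/-- `D`-equivalence of Cartan data. -/
def DEquivTo (u v : RootDatum X H) : Prop :=
  u.p = v.p ∧ ∃ D : X → ℂ, (∀ x, D x ≠ 0) ∧ ∀ x y, cartan u x y = D x * cartan v x y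

/-- `Sk^D(v)`. -/
def SkD (v : RootDatum X H) : Set (RootDatum X H) := {u | u ∈ Skeleton v ∧ DEquivTo u v}

/-- `Sp^D(v)`. -/
def SpD (v : RootDatum X H) : Set (RootDatum X H) := {u | u ∈ Spine v ∧ DEquivTo u v}

/-- `StarRel v u₁ u₂ u₃` says `u₁ * u₂ = u₃`, i.e. `σ^{u₁}(u₂) = u₃`: some path from `v`
ends at `u₂` and its namesake path from `u₁` ends at `u₃`. -/
def StarRel (v u₁ u₂ u₃ : RootDatum X H) : Prop :=
  ∃ ms : List X, IsPath v ms u₂ ∧ IsPath u₁ ms u₃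

/-- `u` is the vertex `w·v` for `w` in the Weyl group. -/
def VertexOf (v : RootDatum X H) (w : Module.Dual ℂ H ≃ₗ[ℂ] Module.Dual ℂ H)
    (u : RootDatum X H) : Prop :=
  u ∈ Skeleton v ∧ ∀ x, u.b x = w (v.b x)

end

/-! If `A^{u₁} = D A^v`, follow a path from `v` and its namesake from `u₁`. Writing the endpoints
as `b_u = N b_v`, `a_u = M a_v` and `b_{u'} = N' b_{u₁}`, `a_{u'} = M' a_{u₁}`, the relation
`N' = N`, `M' = D M D⁻¹` is preserved by each reflexion, because the reflexion coefficients at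
`u'` are those at `u` conjugated by `D`; it also gives `A^{u'} = D A^u`. Since the families of
`v` are linearly independent, `M` and `N` depend only on `u`, hence so does `u'`: this is the
well-definedness of `σ^{u₁}`, and closure and associativity follow from it. Every reflexion is an
involution, so paths can be reversed, which produces inverses. -/

theorem _root_.LinearIndependent.sub_smul_self {ι K V : Type*} [Fintype ι] [Field K]
    [AddCommGroup V] [Module K V] {f : ι → V} (hf : LinearIndependent K f) (i : ι) {c : ι → K} (hc : c i ≠ 1) :
    LinearIndependent K fun j => f j - c j • f i := by
  have hspan : Submodule.span K (Set.range fun j => f j - c j • f i) =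
      Submodule.span K (Set.range f) := by
    have hfi : f i ∈ Submodule.span K (Set.range fun j => f j - c j • f i) := by
      have hmem : f i - c i • f i ∈ Submodule.span K (Set.range fun j => f j - c j • f i) :=
        Submodule.subset_span ⟨i, rfl⟩
      rw [show f i - c i • f i = (1 - c i) • f i by rw [sub_smul, one_smul]] at hmem
      simpa [smul_smul, inv_mul_cancel₀ (sub_ne_zero.2 hc.symm)] using
        Submodule.smul_mem _ (1 - c i)⁻¹ hmem
    refine Submodule.span_eq_span ?_ ?_
    · rintro _ ⟨j, rfl⟩
      exact Submodule.sub_mem _ (Submodule.subset_span ⟨j, rfl⟩)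
        (Submodule.smul_mem _ _ (Submodule.subset_span ⟨i, rfl⟩))
    · rintro _ ⟨j, rfl⟩
      rw [← sub_add_cancel (f j) (c j • f i)]
      exact Submodule.add_mem _ (Submodule.subset_span ⟨j, rfl⟩) (Submodule.smul_mem _ _ hfi)
  rw [linearIndependent_iff_card_eq_finrank_span, Set.finrank, hspan, ← Set.finrank,
    ← linearIndependent_iff_card_eq_finrank_span]
  exact hf

attribute [ext] RootDatum

section Reflexion

variable {X : Type*} {H : Type*} [AddCommGroup H] [Module ℂ H]

theorem isIsoReflexion_iff {x : X} {u w : RootDatum X H} :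
    IsIsoReflexion x u w ↔ IsReflexion x u w ∧ cartan u x x = 0 :=
  ⟨fun h => ⟨Or.inr h, h.2.1⟩, fun ⟨h, hxx⟩ => h.resolve_left fun ha => ha.2.1 hxx⟩

theorem IsPath.append {u v w : RootDatum X H} {ms ls : List X} (h₁ : IsPath u ms v)
    (h₂ : IsPath v ls w) : IsPath u (ms ++ ls) w := by
  induction h₁ with
  | nil => exact h₂
  | cons hstep _ ih => exact .cons hstep (ih h₂)

theorem IsIsoPath.append {u v w : RootDatum X H} {ms ls : List X} (h₁ : IsIsoPath u ms v)
    (h₂ : IsIsoPath v ls w) : IsIsoPath u (ms ++ ls) w := by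
  induction h₁ with
  | nil => exact h₂
  | cons hstep _ ih => exact .cons hstep (ih h₂)

theorem IsIsoPath.isPath {u w : RootDatum X H} {ms : List X} (h : IsIsoPath u ms w) :
    IsPath u ms w := by
  induction h with
  | nil => exact .nil _
  | cons hstep _ ih => exact .cons (Or.inr hstep) ih

theorem reflectable_of_row {u u' : RootDatum X H} {x : X} {d : ℂ} (hd : d ≠ 0)
    (hrow : ∀ y, cartan u' x y = d * cartan u x y) (hp : u'.p x = u.p x)
    (h : Reflectable u x) : Reflectable u' x := by
  unfold Reflectable at h ⊢
  simp only [hrow, hp, mul_eq_zero, hd, false_or, ne_eq,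
    show ∀ c c' : ℂ, 2 * (d * c) / (d * c') = 2 * c / c' from fun c c' => by
      rw [mul_left_comm, mul_div_mul_left _ _ hd],
    mul_div_mul_left _ _ hd]
  exact h

/-- Both kinds of reflexion `r_x` have the form `a(y) ↦ a(y) - reflexionCoeffA u x y • a(x)`,
`b(y) ↦ b(y) - reflexionCoeffB u x y • b(x)`; for isotropic `x` the coefficient at `y = x` is `2`,
which turns `a(x)` into `-a(x)`. -/
noncomputable def reflexionCoeffA (u : RootDatum X H) (x y : X) : ℂ :=
  if cartan u x x = 0 then
    if y = x then 2 else if cartan u x y = 0 then 0 else -(cartan u y x / cartan u x y)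
  else 2 * cartan u y x / cartan u x x

noncomputable def reflexionCoeffB (u : RootDatum X H) (x y : X) : ℂ :=
  if cartan u x x = 0 then
    if y = x then 2 else if cartan u x y = 0 then 0 else -1
  else 2 * cartan u x y / cartan u x x

theorem reflexionCoeffA_self (u : RootDatum X H) (x : X) : reflexionCoeffA u x x = 2 := by
  by_cases h : cartan u x x = 0 <;> simp [reflexionCoeffA, h]

theorem reflexionCoeffB_self (u : RootDatum X H) (x : X) : reflexionCoeffB u x x = 2 := by
  by_cases h : cartan u x x = 0 <;> simp [reflexionCoeffB, h]

variable [Fintype X]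

@[simps]
noncomputable def reflect (u : RootDatum X H) (x : X) : RootDatum X H where
  a y := u.a y - reflexionCoeffA u x y • u.a x
  b y := u.b y - reflexionCoeffB u x y • u.b x
  p y := if cartan u x x = 0 ∧ y ≠ x ∧ cartan u x y ≠ 0 then u.p y + 1 else u.p y
  lin_indep_a := u.lin_indep_a.sub_smul_self x (by norm_num [reflexionCoeffA_self])
  lin_indep_b := u.lin_indep_b.sub_smul_self x (by norm_num [reflexionCoeffB_self])

theorem cartan_reflect (u : RootDatum X H) (x y z : X) :
    cartan (reflect u x) y z = cartan u y z - reflexionCoeffA u x y * cartan u x z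
      - reflexionCoeffB u x z * cartan u y x
      + reflexionCoeffA u x y * reflexionCoeffB u x z * cartan u x x := by
  simp only [cartan, reflect_a, reflect_b, map_sub, map_smul, LinearMap.sub_apply,
    LinearMap.smul_apply, smul_eq_mul]
  ring

theorem cartan_reflect_self_left (u : RootDatum X H) (x y : X) :
    cartan (reflect u x) x y = if cartan u x x = 0 then -cartan u x y else cartan u x y := by
  rw [cartan_reflect, reflexionCoeffA_self]
  unfold reflexionCoeffB
  split_ifs with h <;> (try simp only [h]) <;> field_simp <;> ring

theorem cartan_reflect_self_right (u : RootDatum X H) (x y : X) :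
    cartan (reflect u x) y x = if cartan u x x = 0 then -cartan u y x else cartan u y x := by
  rw [cartan_reflect, reflexionCoeffB_self]
  unfold reflexionCoeffA
  split_ifs with h <;> (try simp only [h]) <;> field_simp <;> ring

theorem reflexionCoeffA_reflect (u : RootDatum X H) (x : X) :
    reflexionCoeffA (reflect u x) x = reflexionCoeffA u x := by
  funext y
  unfold reflexionCoeffA
  simp only [cartan_reflect_self_left, cartan_reflect_self_right]
  by_cases h : cartan u x x = 0 <;> simp [h, neg_div_neg_eq]

theorem reflexionCoeffB_reflect (u : RootDatum X H) (x : X) :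
    reflexionCoeffB (reflect u x) x = reflexionCoeffB u x := by
  funext y
  unfold reflexionCoeffB
  simp only [cartan_reflect_self_left]
  by_cases h : cartan u x x = 0 <;> simp [h]

theorem reflect_reflect (u : RootDatum X H) (x : X) : reflect (reflect u x) x = u := by
  apply RootDatum.ext <;> funext y
  · simp only [reflect_a, reflexionCoeffA_reflect, reflexionCoeffA_self]
    module
  · simp only [reflect_b, reflexionCoeffB_reflect, reflexionCoeffB_self]
    module
  · simp only [reflect_p, cartan_reflect_self_left]
    by_cases h : cartan u x x = 0 <;> by_cases hy : cartan u x y = 0 <;> by_cases hyx : y = x <;>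
      simp [h, hy, hyx, add_assoc, CharTwo.add_self_eq_zero]

theorem reflectable_reflect {u : RootDatum X H} {x : X} (h : Reflectable u x) :
    Reflectable (reflect u x) x := by
  refine reflectable_of_row (d := if cartan u x x = 0 then -1 else 1) (by split_ifs <;> norm_num)
    (fun y => by rw [cartan_reflect_self_left]; split_ifs <;> ring) (by simp) h

theorem isReflexion_iff {x : X} {u w : RootDatum X H} :
    IsReflexion x u w ↔ Reflectable u x ∧ w = reflect u x := by
  constructor
  · rintro (⟨hr, hxx, hp, ha, hb⟩ | ⟨hr, hxx, hax, hbx, hpx, hy⟩)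
    · refine ⟨hr, RootDatum.ext (funext fun y => ?_) (funext fun y => ?_) (funext fun y => ?_)⟩
      <;> simp [ha, hb, hp, reflexionCoeffA, reflexionCoeffB, hxx]
    · refine ⟨hr, RootDatum.ext (funext fun y => ?_) (funext fun y => ?_) (funext fun y => ?_)⟩
      all_goals
        obtain rfl | hyx := eq_or_ne y x
        · simp [hax, hbx, hpx, reflexionCoeffA_self, reflexionCoeffB_self, two_smul]
        by_cases h0 : cartan u x y = 0
        · simp [(hy y hyx).1 h0, reflexionCoeffA, reflexionCoeffB, hxx, hyx, h0]
        · simp [(hy y hyx).2 h0, reflexionCoeffA, reflexionCoeffB, hxx, hyx, h0]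
  · rintro ⟨hr, rfl⟩
    by_cases hxx : cartan u x x = 0
    · refine Or.inr ⟨hr, hxx, ?_, ?_, ?_, fun y hyx => ⟨fun h0 => ?_, fun h0 => ?_⟩⟩
      · simp [reflexionCoeffA_self, two_smul]
      · simp [reflexionCoeffB_self, two_smul]
      · simp
      · simp [reflexionCoeffA, reflexionCoeffB, hxx, hyx, h0]
      · simp [reflexionCoeffA, reflexionCoeffB, hxx, hyx, h0, sub_eq_add_neg, ← neg_smul]
    · exact Or.inl ⟨hr, hxx, funext fun y => by simp [hxx], fun y => by simp [reflexionCoeffA, hxx],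
        fun y => by simp [reflexionCoeffB, hxx]⟩

theorem IsReflexion.symm {x : X} {u w : RootDatum X H} (h : IsReflexion x u w) :
    IsReflexion x w u := by
  obtain ⟨hr, rfl⟩ := isReflexion_iff.1 h
  exact isReflexion_iff.2 ⟨reflectable_reflect hr, (reflect_reflect u x).symm⟩

theorem IsIsoReflexion.symm {x : X} {u w : RootDatum X H} (h : IsIsoReflexion x u w) :
    IsIsoReflexion x w u := by
  obtain ⟨hr, hxx⟩ := isIsoReflexion_iff.1 h
  obtain ⟨-, rfl⟩ := isReflexion_iff.1 hr
  exact isIsoReflexion_iff.2 ⟨hr.symm, by rw [cartan_reflect_self_left, if_pos hxx, hxx, neg_zero]⟩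

theorem IsPath.unique {u w w' : RootDatum X H} {ms : List X} (h : IsPath u ms w)
    (h' : IsPath u ms w') : w = w' := by
  induction h with
  | nil => cases h'; rfl
  | cons hstep _ ih =>
    cases h' with
    | cons hstep' hrest' =>
      obtain ⟨-, rfl⟩ := isReflexion_iff.1 hstep
      obtain ⟨-, rfl⟩ := isReflexion_iff.1 hstep'
      exact ih hrest'

theorem IsPath.reverse {u w : RootDatum X H} {ms : List X} (h : IsPath u ms w) :
    IsPath w ms.reverse u := by
  induction h with
  | nil => exact .nil _
  | cons hstep _ ih =>
    rw [List.reverse_cons]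
    exact ih.append (.cons hstep.symm (.nil _))

theorem IsIsoPath.reverse {u w : RootDatum X H} {ms : List X} (h : IsIsoPath u ms w) :
    IsIsoPath w ms.reverse u := by
  induction h with
  | nil => exact .nil _
  | cons hstep _ ih =>
    rw [List.reverse_cons]
    exact ih.append (.cons hstep.symm (.nil _))

end Reflexion

section

variable {X : Type*} {H : Type*} [AddCommGroup H] [Module ℂ H]

def RowScaled (D : X → ℂ) (u u' : RootDatum X H) : Prop :=
  (∀ y z, cartan u' y z = D y * cartan u y z) ∧ u'.p = u.p

theorem dEquivTo_iff_exists_rowScaled {u v : RootDatum X H} :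
    DEquivTo u v ↔ ∃ D : X → ℂ, (∀ y, D y ≠ 0) ∧ RowScaled D v u :=
  ⟨fun ⟨hp, D, hD, hc⟩ => ⟨D, hD, hc, hp⟩, fun ⟨D, hD, hc, hp⟩ => ⟨hp, D, hD, hc⟩⟩

namespace RowScaled

variable {D : X → ℂ} {u u' : RootDatum X H}

theorem symm (hD : ∀ y, D y ≠ 0) (h : RowScaled D u u') :
    RowScaled (fun y => (D y)⁻¹) u' u :=
  ⟨fun y z => by rw [h.1, inv_mul_cancel_left₀ (hD y)], h.2.symm⟩

theorem trans {D' : X → ℂ} {u'' : RootDatum X H} (h : RowScaled D u u')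
    (h' : RowScaled D' u' u'') : RowScaled (fun y => D' y * D y) u u'' :=
  ⟨fun y z => by rw [h'.1, h.1, mul_assoc], h'.2.trans h.2⟩

theorem cartan_eq_zero_iff (hD : ∀ y, D y ≠ 0) (h : RowScaled D u u') {y z : X} :
    cartan u' y z = 0 ↔ cartan u y z = 0 := by
  rw [h.1, mul_eq_zero, or_iff_right (hD y)]

theorem reflectable (hD : ∀ y, D y ≠ 0) (h : RowScaled D u u') {x : X}
    (hx : Reflectable u x) : Reflectable u' x :=
  reflectable_of_row (hD x) (h.1 x) (congrFun h.2 x) hx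

theorem reflexionCoeffA_eq (hD : ∀ y, D y ≠ 0) (h : RowScaled D u u') (x y : X) :
    reflexionCoeffA u' x y = D y * reflexionCoeffA u x y / D x := by
  have hx := hD x
  have hy := hD y
  unfold reflexionCoeffA
  simp only [h.1, mul_eq_zero, hx, false_or]
  split_ifs with hxx hyx hxy
  · subst hyx; field_simp
  · ring
  · field_simp
  · field_simp

theorem reflexionCoeffB_eq (hD : ∀ y, D y ≠ 0) (h : RowScaled D u u') (x : X) :
    reflexionCoeffB u' x = reflexionCoeffB u x := by
  funext y
  have hx := hD x
  unfold reflexionCoeffB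
  simp only [h.1, mul_eq_zero, hx, false_or]
  split_ifs <;> field_simp

end RowScaled

end

section

variable {X : Type*} [Fintype X] {H : Type*} [AddCommGroup H] [Module ℂ H]

theorem sum_smul_sub_smul_sum {M : Type*} [AddCommGroup M] [Module ℂ M] (f g : X → ℂ) (c : ℂ)
    (e : X → M) : ∑ z, f z • e z - c • ∑ z, g z • e z = ∑ z, (f z - c * g z) • e z := by
  simp only [Finset.smul_sum, smul_smul, sub_smul, Finset.sum_sub_distrib]

/-- `u'` lies over `u₁` as `u` lies over `v₀`: the coordinates of `b_{u'}` in the basis `b_{u₁}`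
are those of `b_u` in the basis `b_{v₀}`, and likewise for `a`, up to conjugation by `D`. -/
def Transported (D : X → ℂ) (v₀ u₁ u u' : RootDatum X H) : Prop :=
  u'.p = u.p ∧ ∃ M N : X → X → ℂ,
    (∀ y, u.a y = ∑ z, M y z • v₀.a z) ∧ (∀ y, u'.a y = ∑ z, (D y * M y z / D z) • u₁.a z) ∧
    (∀ y, u.b y = ∑ z, N y z • v₀.b z) ∧ (∀ y, u'.b y = ∑ z, N y z • u₁.b z)

namespace Transported

variable {D : X → ℂ} {v₀ u₁ u u' : RootDatum X H}

theorem refl (hD : ∀ y, D y ≠ 0) (h₀ : RowScaled D v₀ u₁) : Transported D v₀ u₁ v₀ u₁ := by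
  refine ⟨h₀.2, fun y z => if y = z then 1 else 0, fun y z => if y = z then 1 else 0,
    fun y => ?_, fun y => ?_, fun y => ?_, fun y => ?_⟩ <;> simp [mul_ite, ite_div, hD]

theorem rowScaled (hD : ∀ y, D y ≠ 0) (h₀ : RowScaled D v₀ u₁)
    (h : Transported D v₀ u₁ u u') : RowScaled D u u' := by
  obtain ⟨hp, M, N, ha, ha', hb, hb'⟩ := h
  refine ⟨fun y z => ?_, hp⟩
  simp only [cartan, ha, ha', hb, hb', map_sum, map_smul, LinearMap.sum_apply,
    LinearMap.smul_apply, smul_eq_mul, Finset.mul_sum]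
  refine Finset.sum_congr rfl fun t _ => Finset.sum_congr rfl fun w _ => ?_
  have hc := h₀.1 t w
  simp only [cartan] at hc
  rw [hc]
  field_simp [hD t]

theorem reflect (hD : ∀ y, D y ≠ 0) (h₀ : RowScaled D v₀ u₁) (h : Transported D v₀ u₁ u u')
    (x : X) : Transported D v₀ u₁ (KMS.reflect u x) (KMS.reflect u' x) := by
  have hs := h.rowScaled hD h₀
  obtain ⟨hp, M, N, ha, ha', hb, hb'⟩ := h
  refine ⟨funext fun y => ?_, fun y z => M y z - reflexionCoeffA u x y * M x z,
    fun y z => N y z - reflexionCoeffB u x y * N x z, fun y => ?_, fun y => ?_, fun y => ?_,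
    fun y => ?_⟩
  · simp only [reflect_p, hp, ne_eq, hs.cartan_eq_zero_iff hD]
  · rw [reflect_a, ha, ha, sum_smul_sub_smul_sum]
  · rw [reflect_a, ha', ha', sum_smul_sub_smul_sum, hs.reflexionCoeffA_eq hD]
    refine Finset.sum_congr rfl fun z _ => ?_
    field_simp [hD x, hD z]
  · rw [reflect_b, hb, hb, sum_smul_sub_smul_sum]
  · rw [reflect_b, hb', hb', sum_smul_sub_smul_sum, hs.reflexionCoeffB_eq hD]

theorem eq {t t' : RootDatum X H} (h : Transported D v₀ u₁ u t) (h' : Transported D v₀ u₁ u t') :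
    t = t' := by
  obtain ⟨hp, M, N, ha, ha', hb, hb'⟩ := h
  obtain ⟨hp₂, M₂, N₂, ha₂, ha₂', hb₂, hb₂'⟩ := h'
  have hM : M = M₂ := funext fun y => funext <|
    Fintype.linearIndependent_iffₛ.1 v₀.lin_indep_a _ _ ((ha y).symm.trans (ha₂ y))
  have hN : N = N₂ := funext fun y => funext <|
    Fintype.linearIndependent_iffₛ.1 v₀.lin_indep_b _ _ ((hb y).symm.trans (hb₂ y))
  subst hM hN
  exact RootDatum.ext (funext fun y => (ha' y).trans (ha₂' y).symm)
    (funext fun y => (hb' y).trans (hb₂' y).symm) (hp.trans hp₂.symm)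

theorem exists_isPath (hD : ∀ y, D y ≠ 0) (h₀ : RowScaled D v₀ u₁)
    (h : Transported D v₀ u₁ u u') {ms : List X} {w : RootDatum X H} (hw : IsPath u ms w) :
    ∃ w', IsPath u' ms w' ∧ Transported D v₀ u₁ w w' := by
  induction hw generalizing u' with
  | nil => exact ⟨u', .nil _, h⟩
  | @cons u _ _ x _ hstep _ ih =>
    obtain ⟨hr, rfl⟩ := isReflexion_iff.1 hstep
    obtain ⟨w', hw', hww'⟩ := ih (h.reflect hD h₀ x)
    have hr' := (h.rowScaled hD h₀).reflectable hD hr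
    exact ⟨w', .cons (isReflexion_iff.2 ⟨hr', rfl⟩) hw', hww'⟩

theorem of_isPath (hD : ∀ y, D y ≠ 0) (h₀ : RowScaled D v₀ u₁)
    (h : Transported D v₀ u₁ u u') {ms : List X} {w w' : RootDatum X H} (hw : IsPath u ms w)
    (hw' : IsPath u' ms w') : Transported D v₀ u₁ w w' := by
  obtain ⟨w'', hw'', hww''⟩ := h.exists_isPath hD h₀ hw
  rwa [hw'.unique hw'']

theorem isIsoPath (hD : ∀ y, D y ≠ 0) (h₀ : RowScaled D v₀ u₁)
    (h : Transported D v₀ u₁ u u') {ms : List X} {w w' : RootDatum X H} (hw : IsIsoPath u ms w)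
    (hw' : IsPath u' ms w') : IsIsoPath u' ms w' := by
  induction hw generalizing u' with
  | nil => cases hw'; exact .nil _
  | cons hstep _ ih =>
    cases hw' with
    | cons hstep' hrest' =>
      obtain ⟨hrefl, hxx⟩ := isIsoReflexion_iff.1 hstep
      obtain ⟨-, rfl⟩ := isReflexion_iff.1 hrefl
      obtain ⟨-, rfl⟩ := isReflexion_iff.1 hstep'
      have hxx' := ((h.rowScaled hD h₀).cartan_eq_zero_iff hD).2 hxx
      exact .cons (isIsoReflexion_iff.2 ⟨hstep', hxx'⟩) (ih (h.reflect hD h₀ _) hrest')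

end Transported

end

section Namesake

variable {X : Type*} [Fintype X] {H : Type*} [AddCommGroup H] [Module ℂ H]
  {v u u₁ u₂ u₃ : RootDatum X H}

theorem RowScaled.isIsoPath {D : X → ℂ} (hD : ∀ y, D y ≠ 0) {u' w w' : RootDatum X H}
    {ms : List X} (h : RowScaled D u u') (hw : IsIsoPath u ms w) (hw' : IsPath u' ms w') :
    IsIsoPath u' ms w' :=
  (Transported.refl hD h).isIsoPath hD h hw hw'

theorem StarRel.transported {D : X → ℂ} (hD : ∀ y, D y ≠ 0) (h₀ : RowScaled D v u₁)
    (h : StarRel v u₁ u₂ u₃) : Transported D v u₁ u₂ u₃ :=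
  let ⟨_, hms, hms'⟩ := h
  (Transported.refl hD h₀).of_isPath hD h₀ hms hms'

theorem StarRel.unique {u₃' : RootDatum X H} (hu₁ : DEquivTo u₁ v) (h : StarRel v u₁ u₂ u₃)
    (h' : StarRel v u₁ u₂ u₃') : u₃ = u₃' := by
  obtain ⟨D, hD, h₀⟩ := dEquivTo_iff_exists_rowScaled.1 hu₁
  exact (h.transported hD h₀).eq (h'.transported hD h₀)

theorem exists_starRel (hu₁ : DEquivTo u₁ v) {ms : List X} (hms : IsPath v ms u₂) :
    ∃ u₃, IsPath u₁ ms u₃ ∧ StarRel v u₁ u₂ u₃ := by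
  obtain ⟨D, hD, h₀⟩ := dEquivTo_iff_exists_rowScaled.1 hu₁
  obtain ⟨u₃, hms', -⟩ := (Transported.refl hD h₀).exists_isPath hD h₀ hms
  exact ⟨u₃, hms', ms, hms, hms'⟩

theorem StarRel.dEquivTo (hu₁ : DEquivTo u₁ v) (hu₂ : DEquivTo u₂ v) (h : StarRel v u₁ u₂ u₃) :
    DEquivTo u₃ v := by
  obtain ⟨D, hD, h₀⟩ := dEquivTo_iff_exists_rowScaled.1 hu₁
  obtain ⟨D₂, hD₂, h₂⟩ := dEquivTo_iff_exists_rowScaled.1 hu₂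
  exact dEquivTo_iff_exists_rowScaled.2 ⟨_, fun y => mul_ne_zero (hD y) (hD₂ y),
    h₂.trans ((h.transported hD h₀).rowScaled hD h₀)⟩

theorem StarRel.mem_skD (hu₁ : u₁ ∈ SkD v) (hu₂ : DEquivTo u₂ v) (h : StarRel v u₁ u₂ u₃) :
    u₃ ∈ SkD v := by
  obtain ⟨⟨ms₁, hms₁⟩, hde₁⟩ := hu₁
  refine ⟨?_, h.dEquivTo hde₁ hu₂⟩
  obtain ⟨ms, -, hms⟩ := h
  exact ⟨ms₁ ++ ms, hms₁.append hms⟩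

theorem StarRel.mem_spD (hu₁ : u₁ ∈ SpD v) (hu₂ : u₂ ∈ SpD v) (h : StarRel v u₁ u₂ u₃) :
    u₃ ∈ SpD v := by
  obtain ⟨⟨ms₁, hms₁⟩, hde₁⟩ := hu₁
  obtain ⟨⟨ms, hms⟩, hde₂⟩ := hu₂
  obtain ⟨t, hms', ht⟩ := exists_starRel hde₁ hms.isPath
  obtain rfl := ht.unique hde₁ h
  obtain ⟨D, hD, h₀⟩ := dEquivTo_iff_exists_rowScaled.1 hde₁
  exact ⟨⟨ms₁ ++ ms, hms₁.append (h₀.isIsoPath hD hms hms')⟩, h.dEquivTo hde₁ hde₂⟩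

theorem StarRel.assoc {w₁ w₂ w₃ : RootDatum X H} (hu₁ : DEquivTo u₁ v)
    (h₂₃ : StarRel v u₂ u₃ w₁) (h₁w : StarRel v u₁ w₁ w₂) (h₁₂ : StarRel v u₁ u₂ w₃) :
    StarRel v w₃ u₃ w₂ := by
  obtain ⟨D, hD, h₀⟩ := dEquivTo_iff_exists_rowScaled.1 hu₁
  obtain ⟨ms, hv, hu₂⟩ := h₂₃
  obtain ⟨t, hw₃, ht⟩ := (h₁₂.transported hD h₀).exists_isPath hD h₀ hu₂
  obtain rfl := ht.eq (h₁w.transported hD h₀)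
  exact ⟨ms, hv, hw₃⟩

theorem exists_starRel_inv (hu : DEquivTo u v) {ms : List X} (hms : IsPath v ms u) :
    ∃ u', IsPath v ms.reverse u' ∧ DEquivTo u' v ∧ StarRel v u u' v ∧ StarRel v u' u v := by
  obtain ⟨D, hD, h₀⟩ := dEquivTo_iff_exists_rowScaled.1 hu
  have hD' : ∀ y, (D y)⁻¹ ≠ 0 := fun y => inv_ne_zero (hD y)
  have h₁ := h₀.symm hD
  obtain ⟨u', hu', ht⟩ := (Transported.refl hD' h₁).exists_isPath hD' h₁ hms.reverse
  refine ⟨u', hu', dEquivTo_iff_exists_rowScaled.2 ⟨_, hD', ht.rowScaled hD' h₁⟩,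
    ⟨ms.reverse, hu', hms.reverse⟩, ⟨ms, hms, ?_⟩⟩
  simpa using hu'.reverse

theorem exists_starRel_inv_of_isIsoPath (hu : DEquivTo u v) {ms : List X}
    (hms : IsIsoPath v ms u) :
    ∃ u', IsIsoPath v ms.reverse u' ∧ DEquivTo u' v ∧ StarRel v u u' v ∧ StarRel v u' u v := by
  obtain ⟨u', hu', hde, h⟩ := exists_starRel_inv hu hms.isPath
  obtain ⟨D, hD, h₀⟩ := dEquivTo_iff_exists_rowScaled.1 hu
  exact ⟨u', (h₀.symm hD).isIsoPath (fun y => inv_ne_zero (hD y)) hms.reverse hu', hde, h⟩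

end Namesake

theorem stmt15_general {X : Type*} [Fintype X] {H : Type*} [AddCommGroup H] [Module ℂ H]
    (v : RootDatum X H) :
    -- the operation is well defined on Sk^D(v) and closed
    (∀ u₁ ∈ SkD v, ∀ u₂ ∈ SkD v, ∃! u₃, StarRel v u₁ u₂ u₃) ∧
    (∀ u₁ ∈ SkD v, ∀ u₂ ∈ SkD v, ∀ u₃, StarRel v u₁ u₂ u₃ → u₃ ∈ SkD v) ∧
    -- v is a two-sided unit
    (∀ u ∈ SkD v, StarRel v v u u ∧ StarRel v u v u) ∧
    -- associativity
    (∀ u₁ ∈ SkD v, ∀ u₂ ∈ SkD v, ∀ u₃ ∈ SkD v, ∀ w₁ w₂ w₃ : RootDatum X H,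
      StarRel v u₂ u₃ w₁ → StarRel v u₁ w₁ w₂ → StarRel v u₁ u₂ w₃ →
      StarRel v w₃ u₃ w₂) ∧
    -- two-sided inverses
    (∀ u ∈ SkD v, ∃ u' ∈ SkD v, StarRel v u u' v ∧ StarRel v u' u v) ∧
    -- Sp^D(v) is a subgroup
    (∀ u₁ ∈ SpD v, ∀ u₂ ∈ SpD v, ∀ u₃, StarRel v u₁ u₂ u₃ → u₃ ∈ SpD v) ∧
    (∀ u ∈ SpD v, ∃ u' ∈ SpD v, StarRel v u u' v ∧ StarRel v u' u v) := by
  refine ⟨fun u₁ hu₁ u₂ ⟨⟨ms, hms⟩, _⟩ => ?_, fun u₁ hu₁ u₂ hu₂ u₃ h => h.mem_skD hu₁ hu₂.2,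
    fun u ⟨⟨ms, hms⟩, _⟩ => ⟨⟨ms, hms, hms⟩, [], .nil v, .nil u⟩,
    fun u₁ hu₁ _ _ _ _ _ _ _ h₂₃ h₁w h₁₂ => h₂₃.assoc hu₁.2 h₁w h₁₂,
    fun u ⟨⟨ms, hms⟩, hu⟩ => ?_, fun u₁ hu₁ u₂ hu₂ u₃ h => h.mem_spD hu₁ hu₂,
    fun u ⟨⟨ms, hms⟩, hu⟩ => ?_⟩
  · obtain ⟨u₃, -, h⟩ := exists_starRel hu₁.2 hms
    exact ⟨u₃, h, fun u₃' h' => h'.unique hu₁.2 h⟩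
  · obtain ⟨u', hu', hde, h⟩ := exists_starRel_inv hu hms
    exact ⟨u', ⟨⟨_, hu'⟩, hde⟩, h⟩
  · obtain ⟨u', hu', hde, h⟩ := exists_starRel_inv_of_isIsoPath hu hms
    exact ⟨u', ⟨⟨_, hu'⟩, hde⟩, h⟩

/-- The operation `u₁ * u₂ := σ^{u₁}(u₂)` makes `Sk^D(v)` into a group with
unit `v`, and `Sp^D(v)` is a subgroup. (Stated via the graph `StarRel` of the operation:
well-definedness, closure, unit laws, associativity, inverses, and closure of `Sp^D(v)`.) -/
theorem stmt15 {X : Type*} [Fintype X] {H : Type*} [AddCommGroup H] [Module ℂ H]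
    [FiniteDimensional ℂ H] (v : RootDatum X H)
    (hadm : Admissible v) :
    -- the operation is well defined on Sk^D(v) and closed
    (∀ u₁ ∈ SkD v, ∀ u₂ ∈ SkD v, ∃! u₃, StarRel v u₁ u₂ u₃) ∧
    (∀ u₁ ∈ SkD v, ∀ u₂ ∈ SkD v, ∀ u₃, StarRel v u₁ u₂ u₃ → u₃ ∈ SkD v) ∧
    -- v is a two-sided unit
    (∀ u ∈ SkD v, StarRel v v u u ∧ StarRel v u v u) ∧
    -- associativity
    (∀ u₁ ∈ SkD v, ∀ u₂ ∈ SkD v, ∀ u₃ ∈ SkD v, ∀ w₁ w₂ w₃ : RootDatum X H,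
      StarRel v u₂ u₃ w₁ → StarRel v u₁ w₁ w₂ → StarRel v u₁ u₂ w₃ →
      StarRel v w₃ u₃ w₂) ∧
    -- two-sided inverses
    (∀ u ∈ SkD v, ∃ u' ∈ SkD v, StarRel v u u' v ∧ StarRel v u' u v) ∧
    -- Sp^D(v) is a subgroup
    (∀ u₁ ∈ SpD v, ∀ u₂ ∈ SpD v, ∀ u₃, StarRel v u₁ u₂ u₃ → u₃ ∈ SpD v) ∧
    (∀ u ∈ SpD v, ∃ u' ∈ SpD v, StarRel v u u' v ∧ StarRel v u' u v) :=
  stmt15_general v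

end KMS
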